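/- arXiv:2003.08700 — 5 statements merged into one kernel-verified Lean document; each statement's English description precedes it below -/
import Mathlib

section
/- Let a_1 ≤ a_2 ≤ ... ≤ a_{n+1} be positive integers with n ≥ 2 and gcd(a_1,...,a_{n+1}) = 1. Set d_i := gcd({a_k : k ≠ i}) and δ_i := gcd({d_k · a_k : k ≠ i}). Then for every i one has δ_i = ∏_{j=1}^{n+1} d_j. -/
/-!
Since the `a k` have no common factor, the `d j` are pairwise coprime, and each `d j` with
`j ≠ k` divides `a k`; hence `a k = (∏_{j ≠ k} d j) * b k`, so
`d k * a k = (∏_j d j) * b k`. It remains to see that the `b k` with `k ≠ i` are coprime: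
a common divisor `g` of them gives `g * d i ∣ a k` for every `k ≠ i`, so `g * d i ∣ d i`
(and if `d i = 0`, both sides of the claim vanish).
-/

open Finset

variable {ι : Type*} [Fintype ι] [DecidableEq ι] {a : ι → ℕ}

lemma coprime_gcd_erase (ha : univ.gcd a = 1) {j k : ι} (hjk : j ≠ k) :
    Nat.Coprime ((univ.erase j).gcd a) ((univ.erase k).gcd a) := by
  rw [Nat.coprime_iff_gcd_eq_one, ← Nat.dvd_one, ← ha]
  refine dvd_gcd fun m _ => ?_
  rcases eq_or_ne m j with rfl | hmj
  · exact (Nat.gcd_dvd_right _ _).trans (gcd_dvd (by simp [hjk]))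
  · exact (Nat.gcd_dvd_left _ _).trans (gcd_dvd (by simp [hmj]))

lemma prod_gcd_erase_dvd (ha : univ.gcd a = 1) (k : ι) :
    ∏ j ∈ univ.erase k, (univ.erase j).gcd a ∣ a k :=
  prod_dvd_of_isRelPrime
    (fun _ _ _ _ hjl => Nat.coprime_iff_isRelPrime.mp (coprime_gcd_erase ha hjl))
    fun j hj => gcd_dvd (by simp [(ne_of_mem_erase hj).symm])

lemma gcd_erase_cofactor_eq_one {b : ι → ℕ}
    (hb : ∀ k, a k = (∏ j ∈ univ.erase k, (univ.erase j).gcd a) * b k) {i : ι}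
    (hi : (univ.erase i).gcd a ≠ 0) : (univ.erase i).gcd b = 1 := by
  have hdvd : (univ.erase i).gcd b * (univ.erase i).gcd a ∣ 1 * (univ.erase i).gcd a := by
    rw [one_mul]
    refine dvd_gcd fun k hk => ?_
    rw [hb k, mul_comm (∏ j ∈ _, _)]
    exact mul_dvd_mul (gcd_dvd hk) (dvd_prod_of_mem _ (by simp [(ne_of_mem_erase hk).symm]))
  exact Nat.dvd_one.mp (Nat.dvd_of_mul_dvd_mul_right (Nat.pos_of_ne_zero hi) hdvd)

theorem gcd_erase_gcd_erase_mul (ha : univ.gcd a = 1) (i : ι) :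
    (univ.erase i).gcd (fun k => (univ.erase k).gcd a * a k) =
      ∏ j, (univ.erase j).gcd a := by
  choose b hb using prod_gcd_erase_dvd ha
  have hmul : ∀ k, (univ.erase k).gcd a * a k = (∏ j, (univ.erase j).gcd a) * b k := by
    intro k
    rw [hb k, ← mul_assoc, mul_prod_erase univ (fun j => (univ.erase j).gcd a) (mem_univ k)]
  rw [gcd_congr rfl fun k _ => hmul k, Finset.gcd_mul_left, normalize_eq]
  rcases eq_or_ne ((univ.erase i).gcd a) 0 with hi | hi
  · rw [prod_eq_zero (mem_univ i) hi, zero_mul]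
  · rw [gcd_erase_cofactor_eq_one hb hi, mul_one]

theorem stmt4_general (n : ℕ) (a : Fin (n + 1) → ℕ)
    (hgcd : Finset.univ.gcd a = 1) :
    ∀ i : Fin (n + 1),
      Finset.gcd (Finset.univ.erase i)
          (fun k => Finset.gcd (Finset.univ.erase k) a * a k) =
        ∏ j, Finset.gcd (Finset.univ.erase j) a :=
  gcd_erase_gcd_erase_mul hgcd

theorem stmt4 (n : ℕ) (hn : 2 ≤ n) (a : Fin (n + 1) → ℕ)
    (hpos : ∀ i, 0 < a i) (hmono : Monotone a) (hgcd : Finset.univ.gcd a = 1) :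
    ∀ i : Fin (n + 1),
      Finset.gcd (Finset.univ.erase i)
          (fun k => Finset.gcd (Finset.univ.erase k) a * a k) =
        ∏ j, Finset.gcd (Finset.univ.erase j) a :=
  stmt4_general n a hgcd
end

section
/- Let a_1, ..., a_{n+1} be positive reals with n ≥ 1, set |a| := Σ_{i=1}^{n+1} a_i, and let Λ be the n×(n+1) real matrix whose k-th column for 1 ≤ k ≤ n is |a|·e_k − a' (where a' = (a_1,...,a_n)^T and e_k is the k-th standard basis vector) and whose (n+1)-st column is −a'. Then for every i ∈ {1,...,n+1}, the absolute value of the determinant of the n×n matrix obtained from Λ by deleting the i-th column equals a_i·|a|^{n−1}. -/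
/-!
The weights `a` form a kernel vector of `Λ`: `Σ_k a_k Λ_k = |a| a' - |a| a' = 0`. For any
`n × (n+1)` matrix with kernel vector `v`, the signed maximal minors `(-1)^i det Λ^(i)` are
proportional to `v`, so it suffices to compute the minor without the last column, which is
`det (|a| I - a' 1ᵀ) = |a|^(n-1) (|a| - Σ a') = |a|^(n-1) a_{n+1}` by the matrix determinant lemma.
-/

open Matrix

namespace Matrix

variable {R : Type*} [CommRing R] {n : ℕ}

theorem det_vecCons_single_one (A : Matrix (Fin n) (Fin (n + 1)) R) (j : Fin (n + 1)) :
    (of (vecCons (Pi.single j 1) A)).det = (-1) ^ (j : ℕ) * (A.submatrix id j.succAbove).det := by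
  rw [det_succ_row_zero, Finset.sum_eq_single j (fun k _ hk => by simp [hk]) (by simp)]
  simp only [of_apply, cons_val, Pi.single_eq_same, mul_one]
  rfl

theorem det_updateCol_single_zero (B : Matrix (Fin (n + 1)) (Fin (n + 1)) R) (i : Fin (n + 1))
    (c : R) :
    (B.updateCol i (Pi.single 0 c)).det
      = (-1) ^ (i : ℕ) * c * (B.submatrix Fin.succ i.succAbove).det := by
  rw [det_succ_column _ i, Finset.sum_eq_single 0 (fun k _ hk => by simp [hk]) (by simp)]
  simp

/-- Border `A` by the row `e_j`: expanding along that row gives the `j`-th minor, while Cramer's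
rule for the bordered matrix `B`, with `B v = v_j e_0`, gives the `i`-th. -/
theorem mul_det_submatrix_succAbove_of_mulVec_eq_zero (A : Matrix (Fin n) (Fin (n + 1)) R)
    {v : Fin (n + 1) → R} (hv : A *ᵥ v = 0) (i j : Fin (n + 1)) :
    (-1) ^ (j : ℕ) * v i * (A.submatrix id j.succAbove).det
      = (-1) ^ (i : ℕ) * v j * (A.submatrix id i.succAbove).det := by
  set B := of (vecCons (Pi.single j 1) A)
  have hBv : B *ᵥ v = Pi.single 0 (v j) := by
    ext k
    refine Fin.cases ?_ (fun k => ?_) k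
    · simp [B, mulVec]
    · rw [Pi.single_eq_of_ne (Fin.succ_ne_zero k)]
      exact congrFun hv k
  calc (-1) ^ (j : ℕ) * v i * (A.submatrix id j.succAbove).det
      = v i * B.det := by rw [det_vecCons_single_one]; ring
    _ = (B.updateCol i (B *ᵥ v)).det := by
      rw [← smul_eq_mul, ← det_updateCol_sum]
      congr 2
      ext k
      simp only [mulVec, dotProduct, smul_eq_mul, mul_comm]
    _ = _ := by
      rw [hBv, det_updateCol_single_zero]
      rfl

theorem det_smul_one_sub_replicateCol_mul_replicateRow {m K : Type*} [Fintype m] [DecidableEq m]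
    [Nonempty m] [Field K] {s : K} (hs : s ≠ 0) (u v : m → K) :
    (s • (1 : Matrix m m K) - replicateCol Unit u * replicateRow Unit v).det
      = s ^ (Fintype.card m - 1) * (s - v ⬝ᵥ u) := by
  have hfactor : s • (1 : Matrix m m K) - replicateCol Unit u * replicateRow Unit v
      = s • (1 + replicateCol Unit (-s⁻¹ • u) * replicateRow Unit v) := by
    rw [smul_add, smul_one_eq_diagonal, replicateCol_smul, Matrix.smul_mul, smul_smul]
    simp [hs, sub_eq_add_neg]
  obtain ⟨k, hk⟩ := Nat.exists_eq_add_one_of_ne_zero (Fintype.card_ne_zero (α := m))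
  rw [hfactor, det_smul, det_one_add_replicateCol_mul_replicateRow, dotProduct_smul, hk,
    Nat.add_sub_cancel, pow_succ, smul_eq_mul, mul_assoc, mul_add, mul_one, neg_mul, mul_neg,
    ← mul_assoc s, mul_inv_cancel₀ hs, one_mul, ← sub_eq_add_neg]

end Matrix

theorem stmt7 (n : ℕ) (hn : 1 ≤ n) (a : Fin (n + 1) → ℝ) (hpos : ∀ i, 0 < a i) :
    ∀ i : Fin (n + 1),
      |((Matrix.of fun (j : Fin n) (k : Fin (n + 1)) =>
            (if (j : ℕ) = (k : ℕ) then (∑ l, a l) else 0) - a j.castSucc).submatrix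
          id i.succAbove).det| = a i * (∑ l, a l) ^ (n - 1) := by
  intro i
  set s := ∑ l, a l
  have hs : 0 < s := Finset.sum_pos (fun l _ => hpos l) Finset.univ_nonempty
  set Λ : Matrix (Fin n) (Fin (n + 1)) ℝ :=
    Matrix.of fun j k => (if (j : ℕ) = (k : ℕ) then s else 0) - a j.castSucc
  have hker : Λ *ᵥ a = 0 := by
    ext j
    simp_rw [Λ, mulVec, dotProduct, of_apply, sub_mul, ite_mul, zero_mul, ← Fin.val_castSucc j,
      Fin.val_inj, Finset.sum_sub_distrib, Finset.sum_ite_eq, ← Finset.mul_sum]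
    simp [s, mul_comm]
  have hlast : (Λ.submatrix id (Fin.last n).succAbove).det = s ^ (n - 1) * a (Fin.last n) := by
    have hΛ : Λ.submatrix id (Fin.last n).succAbove
        = s • 1 - replicateCol Unit (fun j : Fin n => a j.castSucc) * replicateRow Unit (1 : Fin n → ℝ) := by
      ext j k
      simp [Λ, Matrix.one_apply, Matrix.mul_apply, Fin.ext_iff]
    have : Nonempty (Fin n) := ⟨⟨0, hn⟩⟩
    rw [hΛ, det_smul_one_sub_replicateCol_mul_replicateRow hs.ne', Fintype.card_fin,
      one_dotProduct, sub_eq_iff_eq_add'.mpr (Fin.sum_univ_castSucc a)]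
  have key := congrArg abs (mul_det_submatrix_succAbove_of_mulVec_eq_zero Λ hker i (Fin.last n))
  simp only [hlast, abs_mul, abs_pow, abs_neg, abs_one, one_pow, one_mul, abs_of_pos hs,
    abs_of_pos (hpos _)] at key
  refine mul_left_cancel₀ (hpos (Fin.last n)).ne' ?_
  rw [← key]
  ring
end

section
/- Let n ≥ 1 and d ≥ n+1 be integers. Then the set of points x ∈ ℤ^n satisfying Σ_{j=1}^n x_j ≤ 1 and d·x_k − Σ_{j=1}^n x_j ≥ −(d−n) for every k = 1,...,n is exactly {0, e_1, ..., e_n, −𝟙}, where e_k are the standard basis vectors and 𝟙 = (1,...,1). -/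
/-!
Summing the constraints `d x_k - ∑ x ≥ -(d - n)` over `k` gives `(d - n) (∑ x + n) ≥ 0`, so
`∑ x ≥ -n`, and then each single constraint gives `d x_k ≥ -d`, i.e. `x_k ≥ -1`. If some
`x_k = -1`, its constraint forces `∑ x ≤ -n`, so every coordinate is `-1`. Otherwise `x ≥ 0` with
`∑ x ≤ 1`, so `x` is `0` or a standard basis vector. Conversely these `n + 2` points satisfy all
the inequalities.
-/

open Finset

section

variable {ι : Type*} [Fintype ι]

lemma Fintype.eq_of_le_of_sum_le {f g : ι → ℤ} (hfg : f ≤ g) (hsum : ∑ i, g i ≤ ∑ i, f i) :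
    f = g :=
  funext fun i => (sum_eq_sum_iff_of_le fun i _ => hfg i).1
    ((sum_le_sum fun i _ => hfg i).antisymm hsum) i (mem_univ i)

lemma eq_zero_or_eq_single_of_nonneg_of_sum_le_one [DecidableEq ι] {x : ι → ℤ} (hx : ∀ i, 0 ≤ x i)
    (hsum : ∑ i, x i ≤ 1) : x = 0 ∨ ∃ i, x = Pi.single i 1 := by
  by_cases hzero : x = 0
  · exact .inl hzero
  obtain ⟨i, hi⟩ : ∃ i, x i ≠ 0 := by simpa [funext_iff] using hzero
  refine .inr ⟨i, (Fintype.eq_of_le_of_sum_le (fun j => ?_) (by simpa using hsum)).symm⟩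
  rcases eq_or_ne j i with rfl | hji
  · have := hx j
    simp only [Pi.single_eq_same]
    omega
  · simpa [Pi.single_eq_of_ne hji] using hx j

lemma eq_neg_one_of_sum_le_neg_card {x : ι → ℤ} (hx : ∀ i, -1 ≤ x i)
    (hsum : ∑ i, x i ≤ -(Fintype.card ι : ℤ)) : x = fun _ => -1 :=
  (Fintype.eq_of_le_of_sum_le hx (by simpa using hsum)).symm

variable {d : ℤ} {x : ι → ℤ}

lemma neg_card_le_sum_of_framing_ineq (hd : (Fintype.card ι : ℤ) < d)
    (hx : ∀ k, -(d - Fintype.card ι) ≤ d * x k - ∑ j, x j) :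
    -(Fintype.card ι : ℤ) ≤ ∑ j, x j := by
  have hsum : ∑ k, (d * x k - ∑ j, x j) = (d - Fintype.card ι) * ∑ j, x j := by
    simp only [sum_sub_distrib, ← mul_sum, sum_const, card_univ, nsmul_eq_mul]
    ring
  have := sum_le_sum fun k (_ : k ∈ univ) => hx k
  simp only [hsum, sum_const, card_univ, nsmul_eq_mul] at this
  nlinarith

lemma neg_one_le_of_framing_ineq (hd : (Fintype.card ι : ℤ) < d)
    (hx : ∀ k, -(d - Fintype.card ι) ≤ d * x k - ∑ j, x j) (k : ι) : -1 ≤ x k := by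
  have := neg_card_le_sum_of_framing_ineq hd hx
  have := hx k
  nlinarith

end

theorem stmt11_general (n : ℕ) (d : ℤ) (hd : (n : ℤ) + 1 ≤ d) :
    {x : Fin n → ℤ |
        (∑ j, x j) ≤ 1 ∧ ∀ k, -(d - (n : ℤ)) ≤ d * x k - ∑ j, x j} =
      insert 0 (insert (fun _ => -1)
        (Set.range fun i : Fin n => (Pi.single i 1 : Fin n → ℤ))) := by
  ext x
  simp only [Set.mem_ofPred_eq, Set.mem_insert_iff, Set.mem_range]
  constructor
  · rintro ⟨hsum, hx⟩
    have hd' : (Fintype.card (Fin n) : ℤ) < d := by rw [Fintype.card_fin]; omega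
    have hx' : ∀ k, -(d - Fintype.card (Fin n)) ≤ d * x k - ∑ j, x j := by simpa using hx
    have hlow := neg_one_le_of_framing_ineq hd' hx'
    by_cases hneg : ∃ k, x k = -1
    · obtain ⟨k, hk⟩ := hneg
      have hxk := hx k
      rw [hk] at hxk
      refine .inr (.inl (eq_neg_one_of_sum_le_neg_card hlow ?_))
      rw [Fintype.card_fin]
      linarith
    · push Not at hneg
      have hnonneg : ∀ k, 0 ≤ x k := fun k => by
        have := hlow k
        have := hneg k
        omega
      rcases eq_zero_or_eq_single_of_nonneg_of_sum_le_one hnonneg hsum with h | h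
      · exact .inl h
      · exact .inr (.inr (h.imp fun _ h => h.symm))
  · rintro (rfl | rfl | ⟨i, rfl⟩)
    · exact ⟨by simp, fun k => by simp only [Pi.zero_apply, mul_zero, sum_const_zero]; omega⟩
    · exact ⟨by simp, fun k => by simp⟩
    · refine ⟨by simp, fun k => ?_⟩
      rw [sum_pi_single' i 1 univ, if_pos (mem_univ i), Pi.single_apply]
      split_ifs <;> omega

theorem stmt11 (n : ℕ) (hn : 1 ≤ n) (d : ℤ) (hd : (n : ℤ) + 1 ≤ d) :
    {x : Fin n → ℤ |
        (∑ j, x j) ≤ 1 ∧ ∀ k, -(d - (n : ℤ)) ≤ d * x k - ∑ j, x j} =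
      insert 0 (insert (fun _ => -1)
        (Set.range fun i : Fin n => (Pi.single i 1 : Fin n → ℤ))) :=
  stmt11_general n d hd
end

section
/- Let n ≥ 2 and d ≥ 2 be integers, and let B be the n×n integer matrix with B_{ij} = d−1 if i = j ≤ n−1, B_{in} = 1 for all i, and B_{ij} = −1 otherwise (i.e. the first n−1 diagonal entries are d−1, the last column is all 1's, and all remaining entries are −1). Then det(B) = d^{n−1}, and the cokernel ℤ^n / B·ℤ^n is isomorphic to (ℤ/dℤ)^{n−1}; equivalently, the Smith normal form of B is diag(1, d, ..., d). -/
/-!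
Index the matrix by any finite type with a distinguished index `l` (the last one, in the
theorem). Subtracting row `l` from every other row, and then adding column `l` to every other
column, turns `B` into `diag(d, …, d, 1)`, so `det B = d ^ (n - 1)`. For the cokernel,
`(B y)ᵢ - (B y)ₗ = d yᵢ` for `i ≠ l`, and conversely every `x` with `xᵢ ≡ xₗ (mod d)` for all `i`
is an image `B y`; hence the image of `B` is the kernel of the surjection
`x ↦ (xᵢ - xₗ mod d)_{i ≠ l}` onto `(ℤ/dℤ)^(n-1)`.
-/

open Matrix Finset

variable {ι : Type*} [DecidableEq ι]

def transitionMatrix {R : Type*} [Ring R] (d : R) (l : ι) : Matrix ι ι R :=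
  of fun i j => if j = l then 1 else if i = j then d - 1 else -1

def diffMod (d : ℕ) (l : ι) : (ι → ℤ) →ₗ[ℤ] ({i // i ≠ l} → ZMod d) where
  toFun x i := ((x i - x l : ℤ) : ZMod d)
  map_add' x y := by ext; simp only [Pi.add_apply]; push_cast; ring
  map_smul' r x := by
    ext; simp only [Pi.smul_apply, smul_eq_mul, RingHom.id_apply]; push_cast; ring

theorem diffMod_surjective (d : ℕ) (l : ι) : Function.Surjective (diffMod d l) := by
  intro t
  refine ⟨fun i => if h : i = l then 0 else ZMod.cast (t ⟨i, h⟩), funext fun i => ?_⟩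
  simp [diffMod, i.2]

variable [Fintype ι] {R : Type*} [CommRing R]

theorem det_transitionMatrix (d : R) (l : ι) :
    (transitionMatrix d l).det = d ^ (Fintype.card ι - 1) := by
  set D : Matrix ι ι R := diagonal (Function.update (fun _ => d) l 1)
  set N : Matrix ι ι R := of fun i j => if i = l then (if j = l then 1 else -1) else D i j
  have hBN : (transitionMatrix d l).det = N.det := by
    refine det_eq_of_forall_row_eq_smul_add_const (fun i => if i = l then 0 else 1) l
      (if_pos rfl) fun i j => ?_
    by_cases hi : i = l <;> by_cases hj : j = l <;> by_cases hij : i = j <;>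
      simp_all [transitionMatrix, N, D, sub_eq_add_neg]
  have hND : N.det = D.det := by
    rw [← det_transpose N, ← det_transpose D]
    refine det_eq_of_forall_row_eq_smul_add_const (fun j => if j = l then 0 else -1) l
      (if_pos rfl) fun j i => ?_
    by_cases hi : i = l <;> by_cases hj : j = l <;> by_cases hij : i = j <;>
      simp_all [N, D]
  rw [hBN, hND, det_diagonal, prod_update_of_mem (mem_univ l), prod_const, one_mul,
    card_sdiff_of_subset (by simp), card_singleton, card_univ]

theorem transitionMatrix_mulVec_apply (d : R) (l : ι) (y : ι → R) (i : ι) :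
    (transitionMatrix d l *ᵥ y) i =
      d * Function.update y l 0 i + (y l - ∑ j ∈ univ.erase l, y j) := by
  have hcol : ∀ j ∈ univ.erase l, transitionMatrix d l i j * y j =
      d * (if i = j then y j else 0) - y j := by
    intro j hj
    have hjl : j ≠ l := ne_of_mem_erase hj
    by_cases hij : i = j <;> simp [transitionMatrix, hjl, hij]; ring
  rw [mulVec, dotProduct, ← add_sum_erase _ _ (mem_univ l), sum_congr rfl hcol, sum_sub_distrib,
    ← mul_sum, sum_ite_eq]
  by_cases hil : i = l <;> simp [transitionMatrix, hil] <;> ring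

theorem transitionMatrix_mulVec_sub_apply (d : R) {l i : ι} (hi : i ≠ l) (y : ι → R) :
    (transitionMatrix d l *ᵥ y) i - (transitionMatrix d l *ᵥ y) l = d * y i := by
  simp [transitionMatrix_mulVec_apply, hi]

theorem range_transitionMatrix_eq_ker_diffMod (d : ℕ) (l : ι) :
    LinearMap.range (transitionMatrix (d : ℤ) l).mulVecLin = LinearMap.ker (diffMod d l) := by
  refine le_antisymm ?_ fun x hx => ?_
  · rintro _ ⟨y, rfl⟩
    ext i
    change (((_ - _ : ℤ)) : ZMod d) = 0
    rw [mulVecLin_apply, transitionMatrix_mulVec_sub_apply _ i.2]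
    simp
  · have hdvd : ∀ i, (d : ℤ) ∣ x i - x l := fun i => by
      by_cases hi : i = l
      · simp [hi]
      · rw [← ZMod.intCast_zmod_eq_zero_iff_dvd]
        exact congrFun hx ⟨i, hi⟩
    set q : ι → ℤ := fun i => (x i - x l) / d
    refine ⟨Function.update q l (x l + ∑ j ∈ univ.erase l, q j), funext fun i => ?_⟩
    have hsum : ∑ j ∈ univ.erase l, Function.update q l (x l + ∑ j ∈ univ.erase l, q j) j =
        ∑ j ∈ univ.erase l, q j :=
      sum_congr rfl fun j hj => Function.update_of_ne (ne_of_mem_erase hj) _ _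
    rw [mulVecLin_apply, transitionMatrix_mulVec_apply, Function.update_idem, hsum,
      Function.update_self, add_sub_cancel_right]
    by_cases hi : i = l
    · simp [hi]
    · rw [Function.update_of_ne hi, Int.mul_ediv_cancel' (hdvd i), sub_add_cancel]

noncomputable def cokernelTransitionMatrixEquiv (d : ℕ) (l : ι) :
    ((ι → ℤ) ⧸ LinearMap.range (transitionMatrix (d : ℤ) l).mulVecLin) ≃ₗ[ℤ]
      ({i // i ≠ l} → ZMod d) :=
  (Submodule.quotEquivOfEq _ _ (range_transitionMatrix_eq_ker_diffMod d l)).trans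
    ((diffMod d l).quotKerEquivOfSurjective (diffMod_surjective d l))

theorem stmt17_general (n d : ℕ) :
    (Matrix.of fun i j : Fin n =>
        if (j : ℕ) = n - 1 then (1 : ℤ)
        else if i = j then (d : ℤ) - 1 else -1).det = (d : ℤ) ^ (n - 1) ∧
      Nonempty
        (((Fin n → ℤ) ⧸ LinearMap.range
            (Matrix.mulVecLin (Matrix.of fun i j : Fin n =>
              if (j : ℕ) = n - 1 then (1 : ℤ)
              else if i = j then (d : ℤ) - 1 else -1))) ≃+
          (Fin (n - 1) → ZMod d)) := by
  rcases n with _ | m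
  · exact ⟨by simp, ⟨(LinearEquiv.ofSubsingleton (R := ℤ) _ (Fin 0 → ZMod d)).toAddEquiv⟩⟩
  have hB : (Matrix.of fun i j : Fin (m + 1) =>
      if (j : ℕ) = m + 1 - 1 then (1 : ℤ) else if i = j then (d : ℤ) - 1 else -1) =
      transitionMatrix (d : ℤ) (Fin.last m) := by
    ext i j
    simp [transitionMatrix, Fin.ext_iff]
  rw [hB]
  refine ⟨by simpa using det_transitionMatrix (d : ℤ) (Fin.last m), ⟨?_⟩⟩
  exact ((cokernelTransitionMatrixEquiv d (Fin.last m)).trans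
    (LinearEquiv.funCongrLeft ℤ (ZMod d) (finSuccAboveEquiv (Fin.last m)))).toAddEquiv

theorem stmt17 (n d : ℕ) (hn : 2 ≤ n) (hd : 2 ≤ d) :
    (Matrix.of fun i j : Fin n =>
        if (j : ℕ) = n - 1 then (1 : ℤ)
        else if i = j then (d : ℤ) - 1 else -1).det = (d : ℤ) ^ (n - 1) ∧
      Nonempty
        (((Fin n → ℤ) ⧸ LinearMap.range
            (Matrix.mulVecLin (Matrix.of fun i j : Fin n =>
              if (j : ℕ) = n - 1 then (1 : ℤ)
              else if i = j then (d : ℤ) - 1 else -1))) ≃+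
          (Fin (n - 1) → ZMod d)) :=
  stmt17_general n d
end

section
/- For all integers n ≥ 4 and d ≥ n+2, one has C(n+d, d) − (n+1)² < C(2d−1, n) − (n+1)·C(d, n), where C(·,·) denotes the binomial coefficient. In particular the number of complex moduli m_d^n = C(n+d,d) − (n+1)² of a smooth degree-d hypersurface in ℙ^n differs from its Hodge number h^{n−2,1} = C(2d−1,n) − (n+1)C(d,n). -/
/-!
By Vandermonde, `C(2d-1, n) = ∑_{i+j=n} C(d-1, i) C(d, j)` and `C(n+d, n) = ∑_{i+j=n} C(n, i) C(d, j)`.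
As `n ≤ d - 1`, every term of the difference is nonnegative, and the two terms `i = 1, 2` alone
already dominate `(n+1) C(d, n)`: expressing `C(d, n)` and `C(d, n-1)` through `C(d, n-2)` turns
this into a polynomial inequality in `n` and `e = d - n`, whose coefficients are positive once it
is written in `n - 4` and `e - 2`.
-/

open Finset

theorem Int.add_choose_add_sum_le_add_choose {m m' n k : ℕ} (hm : m ≤ m')
    {s : Finset (ℕ × ℕ)} (hs : s ⊆ antidiagonal k) :
    ((m + n).choose k : ℤ) + ∑ ij ∈ s, ((m'.choose ij.1 : ℤ) - m.choose ij.1) * n.choose ij.2 ≤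
      (m' + n).choose k := by
  rw [Nat.add_choose_eq, Nat.add_choose_eq]
  push_cast
  calc _ ≤ ∑ ij ∈ antidiagonal k, (m.choose ij.1 : ℤ) * n.choose ij.2 +
        ∑ ij ∈ antidiagonal k, ((m'.choose ij.1 : ℤ) - m.choose ij.1) * n.choose ij.2 := by
        gcongr
        exact fun ij _ _ =>
          mul_nonneg (sub_nonneg.2 (mod_cast Nat.choose_le_choose _ hm)) (by positivity)
    _ = _ := by
        rw [← sum_add_distrib]
        exact sum_congr rfl fun _ _ => by ring

theorem Int.natCast_choose_mul {d k : ℕ} (hk : 0 < k) (hkd : k ≤ d) :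
    (d.choose k : ℤ) * k = d.choose (k - 1) * (d - k + 1) := by
  have h := Nat.choose_succ_right_eq d (k - 1)
  rw [Nat.sub_add_cancel hk] at h
  zify [hk, hkd.trans' (Nat.sub_le k 1)] at h
  linear_combination h

theorem Int.natCast_choose_two_mul_two (m : ℕ) : (m.choose 2 : ℤ) * 2 = m * (m - 1) := by
  have h : (m.choose 2 : ℚ) * 2 = m * (m - 1) := by rw [Nat.cast_choose_two]; ring
  exact_mod_cast h

theorem Int.two_mul_succ_mul_le_of_four_le_of_two_le {n e : ℤ} (hn : 4 ≤ n) (he : 2 ≤ e) :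
    2 * (n + 1) * (e + 1) * (e + 2) ≤
      2 * n * (e - 1) * (e + 2) + n * (n - 1) * (e - 1) * (2 * n + e - 2) := by
  obtain ⟨x, rfl⟩ : ∃ x : ℕ, n = x + 4 := ⟨(n - 4).toNat, by omega⟩
  obtain ⟨y, rfl⟩ : ∃ y : ℕ, e = y + 2 := ⟨(e - 2).toNat, by omega⟩
  rw [← sub_nonneg]
  ring_nf
  positivity

theorem Int.succ_mul_choose_le {n d : ℕ} (hn : 4 ≤ n) (hd : n + 2 ≤ d) :
    ((n : ℤ) + 1) * d.choose n ≤
      ((d : ℤ) - 1 - n) * d.choose (n - 1) +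
        (((d - 1).choose 2 : ℤ) - n.choose 2) * d.choose (n - 2) := by
  have ha := Int.natCast_choose_mul (d := d) (k := n) (by omega) (by omega)
  have hb := Int.natCast_choose_mul (d := d) (k := n - 1) (by omega) (by omega)
  have hc := Int.natCast_choose_two_mul_two (d - 1)
  have hn2 := Int.natCast_choose_two_mul_two n
  rw [Nat.sub_sub] at hb
  push_cast [Nat.cast_sub (by omega : 1 ≤ d), Nat.cast_sub (by omega : 1 ≤ n)] at hb hc
  set a : ℤ := (d.choose n : ℤ)
  set b : ℤ := (d.choose (n - 1) : ℤ)
  set c : ℤ := (d.choose (n - 2) : ℤ)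
  set e : ℤ := d - n
  refine le_of_mul_le_mul_left ?_ (mul_pos (by omega) (by omega) : (0 : ℤ) < 2 * n * (n - 1))
  calc 2 * n * (n - 1) * ((n + 1) * a) = c * (2 * (n + 1) * (e + 1) * (e + 2)) := by
        linear_combination 2 * (n + 1) * (n - 1) * ha + 2 * (n + 1) * (e + 1) * hb
    _ ≤ c * (2 * n * (e - 1) * (e + 2) + n * (n - 1) * (e - 1) * (2 * n + e - 2)) := by
        gcongr
        exact Int.two_mul_succ_mul_le_of_four_le_of_two_le (by exact_mod_cast hn) (by omega)
    _ = _ := by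
        linear_combination -2 * n * (e - 1) * hb - n * (n - 1) * c * (hc - hn2)

theorem stmt19 (n d : ℕ) (hn : 4 ≤ n) (hd : n + 2 ≤ d) :
    ((n + d).choose d : ℤ) - ((n : ℤ) + 1) ^ 2 <
      ((2 * d - 1).choose n : ℤ) - ((n : ℤ) + 1) * (d.choose n : ℤ) := by
  have hpair : {(1, n - 1), (2, n - 2)} ⊆ antidiagonal n := by
    simp only [insert_subset_iff, singleton_subset_iff, HasAntidiagonal.mem_antidiagonal]
    omega
  have hsum := Int.add_choose_add_sum_le_add_choose (n := d) (by omega : n ≤ d - 1) hpair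
  rw [sum_pair (by simp)] at hsum
  dsimp only at hsum
  rw [show d - 1 + d = 2 * d - 1 by omega, Nat.choose_one_right, Nat.choose_one_right,
    Nat.cast_sub (by omega : 1 ≤ d), Nat.cast_one] at hsum
  rw [← Nat.choose_symm_add]
  linarith [Int.succ_mul_choose_le hn hd, pow_pos (by positivity : (0 : ℤ) < n + 1) 2]
end
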